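/- Let r ≥ 1 and let m_1, …, m_r and n_1, …, n_r be positive integers. Let H_r be the abelian group obtained as the quotient of the free abelian group ℤ^r on generators e_1, …, e_r by the subgroup generated by the elements m_1 e_1, the elements n_i e_i − m_{i+1} e_{i+1} for i = 1, …, r−1, and n_r e_r (this is the abelianization of the group ⟨x_1, …, x_r : x_1^{m_1} = 1, x_i^{n_i} = x_{i+1}^{m_{i+1}}, x_r^{n_r} = 1⟩). If H_r is the trivial group, then gcd(m_i, n_j) = 1 for all indices with 1 ≤ i ≤ j ≤ r. -/

import Mathlib

/-! If a prime `p` divides `m_i` and `n_j` with `i ≤ j`, we build a nonzero homomorphism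
`H_r → ℤ/p`. Let `I ≤ j` be the largest index with `p ∣ m_I`, send `e_k` for `I ≤ k ≤ j`
to `n_I ⋯ n_{k-1} · m_{k+1} ⋯ m_j` and every other `e_k` to `0`. Inside that range both
sides of `n_k e_k = m_{k+1} e_{k+1}` go to the same product; at its ends the relations
vanish because `p ∣ m_I` and `p ∣ n_j`. The image of `e_I` is `m_{I+1} ⋯ m_j`, which is
nonzero mod `p` by the choice of `I`. -/

/-- The relation vectors `m_1 e_1`, `n_i e_i − m_{i+1} e_{i+1}`
(`i = 1, …, r−1`) and `n_r e_r` in the free abelian group `ℤ^r`, where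
`r = r' + 1`. -/
def relVectors (r' : ℕ) (m n : Fin (r' + 1) → ℕ) :
    Set (Fin (r' + 1) → ℤ) :=
  {Pi.single (0 : Fin (r' + 1)) (m 0 : ℤ)} ∪
    Set.range (fun i : Fin r' =>
      Pi.single i.castSucc (n i.castSucc : ℤ) - Pi.single i.succ (m i.succ : ℤ)) ∪
    {Pi.single (Fin.last r') (n (Fin.last r') : ℤ)}

theorem eq_zero_of_quotient_closure_trivial {ι M : Type*} [Fintype ι] [DecidableEq ι]
    [AddCommGroup M] {S : Set (ι → ℤ)}
    (htriv : ∀ x : (ι → ℤ) ⧸ AddSubgroup.closure S, x = 0) {c : ι → M}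
    (hc : ∀ x ∈ S, Fintype.linearCombination ℤ c x = 0) : c = 0 := by
  funext k
  have hle : AddSubgroup.closure S ≤ (Fintype.linearCombination ℤ c).toAddMonoidHom.ker :=
    (AddSubgroup.closure_le _).mpr hc
  have hk : Pi.single k 1 ∈ AddSubgroup.closure S :=
    (QuotientAddGroup.eq_zero_iff _).mp (htriv _)
  simpa [Fintype.linearCombination_apply_single] using hle hk

theorem linearCombination_relVectors_eq_zero {R : Type*} [CommRing R] {r' : ℕ}
    {m n : Fin (r' + 1) → ℕ} {c : Fin (r' + 1) → R}
    (hfirst : (m 0 : R) * c 0 = 0)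
    (hstep : ∀ i : Fin r', (n i.castSucc : R) * c i.castSucc = m i.succ * c i.succ)
    (hlast : (n (Fin.last r') : R) * c (Fin.last r') = 0) :
    ∀ x ∈ relVectors r' m n, Fintype.linearCombination ℤ c x = 0 := by
  rintro x ((rfl | ⟨i, rfl⟩) | rfl)
  · simpa [Fintype.linearCombination_apply_single] using hfirst
  · simpa [Fintype.linearCombination_apply_single, sub_eq_zero] using hstep i
  · simpa [Fintype.linearCombination_apply_single] using hlast

section Chain

open Finset

variable {R : Type*} [CommRing R] (a b : ℕ → R)

def chainCoeff (I J k : ℕ) : R :=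
  if I ≤ k ∧ k ≤ J then (∏ l ∈ Ico I k, b l) * ∏ l ∈ Ioc k J, a l else 0

variable {a b} {I J : ℕ}

theorem chainCoeff_of_lt {k : ℕ} (hk : k < I) : chainCoeff a b I J k = 0 :=
  if_neg fun h => by omega

theorem chainCoeff_of_gt {k : ℕ} (hk : J < k) : chainCoeff a b I J k = 0 :=
  if_neg fun h => by omega

theorem chainCoeff_self (hIJ : I ≤ J) : chainCoeff a b I J I = ∏ l ∈ Ioc I J, a l := by
  simp [chainCoeff, hIJ]

theorem mul_chainCoeff_zero (ha : a I = 0) : a 0 * chainCoeff a b I J 0 = 0 := by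
  rcases Nat.eq_zero_or_pos I with rfl | hI
  · rw [ha, zero_mul]
  · rw [chainCoeff_of_lt hI, mul_zero]

theorem mul_chainCoeff_of_le (hb : b J = 0) {k : ℕ} (hk : J ≤ k) :
    b k * chainCoeff a b I J k = 0 := by
  rcases hk.eq_or_lt with rfl | hk
  · rw [hb, zero_mul]
  · rw [chainCoeff_of_gt hk, mul_zero]

theorem mul_chainCoeff_succ (ha : a I = 0) (hb : b J = 0) (k : ℕ) :
    b k * chainCoeff a b I J k = a (k + 1) * chainCoeff a b I J (k + 1) := by
  rcases lt_or_ge (k + 1) I with hk | hk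
  · rw [chainCoeff_of_lt hk, chainCoeff_of_lt (by omega), mul_zero, mul_zero]
  rcases hk.eq_or_lt with hk | hk
  · rw [chainCoeff_of_lt (by omega), ← hk, ha, mul_zero, zero_mul]
  rcases le_or_gt J k with hJk | hkJ
  · rw [mul_chainCoeff_of_le hb hJk, chainCoeff_of_gt (by omega), mul_zero]
  have hIk : I ≤ k := by omega
  rw [chainCoeff, chainCoeff, if_pos ⟨hIk, hkJ.le⟩, if_pos ⟨hk.le, hkJ⟩,
    prod_Ico_succ_top hIk, ← insert_Ioc_add_one_left_eq_Ioc hkJ, prod_insert (by simp)]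
  ring

variable [IsDomain R]

theorem exists_chainCoeff_ne_zero (hIJ : I ≤ J) (ha : a I = 0) :
    ∃ I' ≤ J, a I' = 0 ∧ chainCoeff a b I' J I' ≠ 0 := by
  classical
  refine ⟨Nat.findGreatest (fun k => a k = 0) J, Nat.findGreatest_le J,
    Nat.findGreatest_spec (P := fun k => a k = 0) hIJ ha, ?_⟩
  rw [chainCoeff_self (Nat.findGreatest_le J), prod_ne_zero_iff]
  intro l hl
  exact Nat.findGreatest_is_greatest (mem_Ioc.mp hl).1 (mem_Ioc.mp hl).2

end Chain

theorem abelian_quotient_trivial_imp_gcd_general (r' : ℕ)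
    (m n : Fin (r' + 1) → ℕ)
    (htriv : ∀ x : (Fin (r' + 1) → ℤ) ⧸ AddSubgroup.closure (relVectors r' m n),
      x = 0) :
    ∀ i j : Fin (r' + 1), i ≤ j → Nat.gcd (m i) (n j) = 1 := by
  intro i j hij
  by_contra hgcd
  obtain ⟨p, hp, hpm, hpn⟩ := Nat.Prime.not_coprime_iff_dvd.mp hgcd
  have : Fact p.Prime := ⟨hp⟩
  set a : ℕ → ZMod p := fun l => m (Fin.ofNat (r' + 1) l)
  set b : ℕ → ZMod p := fun l => n (Fin.ofNat (r' + 1) l)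
  have ha : ∀ k : Fin (r' + 1), a k = m k := by simp [a]
  have hb : ∀ k : Fin (r' + 1), b k = n k := by simp [b]
  obtain ⟨I, hIj, hI, hcI⟩ := exists_chainCoeff_ne_zero (a := a) (b := b) (J := j) hij
    (by rw [ha, ZMod.natCast_eq_zero_iff]; exact hpm)
  have hbj : b j = 0 := by rw [hb, ZMod.natCast_eq_zero_iff]; exact hpn
  have hc := eq_zero_of_quotient_closure_trivial htriv
    (c := fun k : Fin (r' + 1) => chainCoeff a b I j k)
    (linearCombination_relVectors_eq_zero
      (by rw [← ha]; exact mul_chainCoeff_zero hI)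
      (fun k => by
        rw [← ha, ← hb, Fin.val_succ, Fin.val_castSucc]
        exact mul_chainCoeff_succ hI hbj k)
      (by rw [← hb]; exact mul_chainCoeff_of_le hbj (Fin.le_last j)))
  exact hcI (congrFun hc ⟨I, hIj.trans_lt j.isLt⟩)

/-- If the abelian group `H_r = ℤ^r / ⟨m_1 e_1, n_i e_i − m_{i+1} e_{i+1},
n_r e_r⟩` is trivial, then `gcd(m_i, n_j) = 1` for all `1 ≤ i ≤ j ≤ r`. -/
theorem abelian_quotient_trivial_imp_gcd (r' : ℕ)
    (m n : Fin (r' + 1) → ℕ)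
    (hm : ∀ i, 0 < m i) (hn : ∀ j, 0 < n j)
    (htriv : ∀ x : (Fin (r' + 1) → ℤ) ⧸ AddSubgroup.closure (relVectors r' m n),
      x = 0) :
    ∀ i j : Fin (r' + 1), i ≤ j → Nat.gcd (m i) (n j) = 1 :=
  abelian_quotient_trivial_imp_gcd_general r' m n htriv
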